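/- arXiv:1304.7751 — 2 statements merged into one kernel-verified Lean document; each statement's English description precedes it below -/
import Mathlib

section
/- Consider the discrete-time sparse vector channel with channel-independent sampling: let 1 ≤ k ≤ m ≤ n be integers, let H be an n×n real diagonal matrix with all diagonal entries H_ii nonzero, let P > 0, set c := P/k and SNR_min := c · min_{1≤i≤n} H_ii². Let Q be any m×n real matrix such that Q Qᵀ is invertible, and set Q^w := (Q Qᵀ)^{−1/2} Q, where (Q Qᵀ)^{−1/2} is the inverse of the positive-definite square root of Q Qᵀ. For a k-element subset s of {1,…,n}, let H_s be the k×k diagonal matrix with diagonal entries H_ii for i ∈ s, let Q^w_s be the m×k submatrix of Q^w consisting of its columns indexed by s, and define the sampled capacity loss L_s := (1/2)·log det(I_k + c·H_s²) − (1/2)·log det(I_m + c·Q^w_s H_s² (Q^w_s)ᵀ). Then the maximum of L_s over all k-element subsets s of {1,…,n} is at least (n/2)·( H(k/n) − (m/n)·H(k/m) − 2/√SNR_min − log(n+1)/n ). -/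
open Matrix Finset

/-- The `m × k` submatrix of an `m × n` real matrix `B` consisting of the columns of `B`
indexed by the subset `s`. -/
def colSubmatrix {m n : ℕ} (B : Matrix (Fin m) (Fin n) ℝ) (s : Finset (Fin n)) :
    Matrix (Fin m) {j // j ∈ s} ℝ :=
  Matrix.of fun i j => B i (j : Fin n)

/-- Binary entropy function `H(x) = -x log x - (1-x) log (1-x)`
(with `H 0 = H 1 = 0`, since `Real.log 0 = 0`). -/
noncomputable def binEntropy (x : ℝ) : ℝ :=
  -x * Real.log x - (1 - x) * Real.log (1 - x)

lemma posSemidef_mul_transpose_self {m n : ℕ} (Q : Matrix (Fin m) (Fin n) ℝ) :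
    (Q * Qᵀ).PosSemidef := by
  rw [← Matrix.conjTranspose_eq_transpose_of_trivial Q]
  exact Matrix.posSemidef_self_mul_conjTranspose Q

/-- The whitened matrix `Q^w := (Q Qᵀ)^{-1/2} Q`, where `(Q Qᵀ)^{-1/2}` is the inverse of
the positive-semidefinite square root of `Q Qᵀ`. -/
noncomputable def posSemidefSqrt {m : ℕ} {A : Matrix (Fin m) (Fin m) ℝ} (hA : A.PosSemidef) :
    Matrix (Fin m) (Fin m) ℝ :=
  hA.1.eigenvectorUnitary.1 * diagonal ((↑) ∘ (√·) ∘ hA.1.eigenvalues) *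
    (star hA.1.eigenvectorUnitary : Matrix (Fin m) (Fin m) ℝ)

noncomputable def whiten {m n : ℕ} (Q : Matrix (Fin m) (Fin n) ℝ) :
    Matrix (Fin m) (Fin n) ℝ :=
  (posSemidefSqrt (posSemidef_mul_transpose_self Q))⁻¹ * Q


/-!
Write `D = c H²`, `W = Q^w` (so that `W Wᵀ = 1`) and `G = Wᵀ W`. By Sylvester's determinant
identity `L_s ≥ -½ log det (G + D⁻¹)_s`, so it suffices to find a `k`-subset `s` on which this
principal minor is small. Expanding the principal minors of `G + D⁻¹` in the diagonal entries
of `D⁻¹`, all at most `ε = 1 / SNR_min`, and comparing term by term with the expansion of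
`det (G + x I) = x^(n-m) (1+x)^m` bounds the sum of all `k × k` principal minors by
`exp (n ε / x) x^(k-n) x^(n-m) (1+x)^m`. The smallest minor is at most this sum divided by
`C(n,k) ≥ exp (n H(k/n)) / (n+1)`, and the choice `x = (m-k)/k + √ε` gives the bound.
-/

namespace Matrix

variable {ι R : Type*} [DecidableEq ι] [CommRing R]

def principalMinor (A : Matrix ι ι R) (s : Finset ι) : R :=
  (A.submatrix ((↑) : s → ι) (↑)).det

variable [Fintype ι]

lemma principalMinor_add_diagonal (A : Matrix ι ι R) (d : ι → R) (s : Finset ι) :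
    (A + diagonal d).principalMinor s =
      ∑ t ∈ s.powerset, (∏ i ∈ s \ t, d i) * A.principalMinor t := by
  -- Expand the `s`-minor, written as a full determinant with identity rows off `s`,
  -- multilinearly in its rows.
  have hsplit : s.piecewise (A + diagonal d).row (1 : Matrix ι ι R).row =
      s.piecewise A.row 0 + s.piecewise (diagonal d).row (1 : Matrix ι ι R).row := by
    ext i j; by_cases hi : i ∈ s <;> simp [piecewise, hi, row]
  rw [principalMinor, ← det_piecewise_one_eq_submatrix_det, hsplit]
  simp only [det]
  change detRowAlternating (R := R) (_ + _) = _
  rw [AlternatingMap.map_add_univ, ← sum_subset (subset_univ s.powerset)]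
  · refine sum_congr rfl fun t ht => ?_
    have hts := mem_powerset.mp ht
    have hrows : t.piecewise (s.piecewise A.row 0)
          (s.piecewise (diagonal d).row (1 : Matrix ι ι R).row) =
        fun i => (if i ∈ s \ t then d i else 1) • t.piecewise A.row (1 : Matrix ι ι R).row i := by
      ext i j
      by_cases hit : i ∈ t
      · simp [hit, hts hit]
      · by_cases his : i ∈ s <;> simp [piecewise, hit, his, row, diagonal_apply, one_apply]
    rw [hrows, AlternatingMap.map_smul_univ, prod_ite_mem, univ_inter, principalMinor,
      ← det_piecewise_one_eq_submatrix_det, smul_eq_mul]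
    rfl
  · intro t _ ht
    obtain ⟨i, hit, his⟩ := not_subset.mp (by simpa using ht)
    exact AlternatingMap.map_coord_zero _ i (by simp [hit, his])

lemma principalMinor_univ (A : Matrix ι ι R) : A.principalMinor univ = A.det := by
  rw [principalMinor, ← det_piecewise_one_eq_submatrix_det, piecewise_univ]
  rfl

lemma det_add_smul_one_eq_sum_principalMinor (A : Matrix ι ι R) (x : R) :
    (A + x • (1 : Matrix ι ι R)).det =
      ∑ t : Finset ι, x ^ (Fintype.card ι - #t) * A.principalMinor t := by
  rw [smul_one_eq_diagonal, ← principalMinor_univ, principalMinor_add_diagonal, powerset_univ]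
  simp [card_univ_sdiff]

end Matrix

section SumPrincipalMinors

variable {ι : Type*} [Fintype ι] [DecidableEq ι]

lemma Finset.card_filter_subset_powersetCard_le (t : Finset ι) (k : ℕ) :
    #{s ∈ powersetCard k univ | t ⊆ s} ≤ (Fintype.card ι - #t).choose (k - #t) := by
  calc #{s ∈ powersetCard k univ | t ⊆ s}
      ≤ #(powersetCard (k - #t) (univ \ t)) := by
        refine card_le_card_of_injOn (· \ t) (fun s hs => ?_) (fun s hs s' hs' hss' => ?_)
        · obtain ⟨hsk, hts⟩ := mem_filter.mp hs
          simp [card_sdiff_of_subset hts, (mem_powersetCard.mp hsk).2]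
        · rw [← sdiff_union_of_subset (mem_filter.mp hs).2,
            ← sdiff_union_of_subset (mem_filter.mp hs').2]
          exact congrArg (· ∪ t) hss'
    _ = (Fintype.card ι - #t).choose (k - #t) := by
        rw [card_powersetCard, card_univ_sdiff]

lemma Finset.card_filter_subset_powersetCard_mul_pow_le {k : ℕ} (hk : k ≤ Fintype.card ι)
    {ε x : ℝ} (hε : 0 ≤ ε) (hx : 0 < x) (t : Finset ι) :
    #{s ∈ powersetCard k univ | t ⊆ s} * ε ^ (k - #t) * x ^ (Fintype.card ι - k) ≤
      Real.exp (Fintype.card ι * ε / x) * x ^ (Fintype.card ι - #t) := by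
  set n := Fintype.card ι
  by_cases htk : #t ≤ k
  · set u := k - #t
    -- `C(n - #t, u) εᵘ ≤ (n ε / x)ᵘ / u! · xᵘ ≤ exp (n ε / x) xᵘ`
    have hcount : (#{s ∈ powersetCard k univ | t ⊆ s} : ℝ) ≤ n ^ u / u.factorial :=
      calc (#{s ∈ powersetCard k univ | t ⊆ s} : ℝ) ≤ ((n - #t).choose u : ℕ) := by
            exact_mod_cast card_filter_subset_powersetCard_le t k
        _ ≤ ((n - #t : ℕ) : ℝ) ^ u / u.factorial := Nat.choose_le_pow_div u (n - #t)
        _ ≤ n ^ u / u.factorial := by gcongr; exact_mod_cast Nat.sub_le n #t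
    have hexp : (n * ε / x) ^ u / u.factorial ≤ Real.exp (n * ε / x) :=
      Real.pow_div_factorial_le_exp _ (by positivity) u
    have hpow : x ^ (n - #t) = x ^ u * x ^ (n - k) := by rw [← pow_add]; congr 1; omega
    calc (#{s ∈ powersetCard k univ | t ⊆ s} : ℝ) * ε ^ u * x ^ (n - k)
        ≤ n ^ u / u.factorial * ε ^ u * x ^ (n - k) := by gcongr
      _ = x ^ u * ((n * ε / x) ^ u / u.factorial) * x ^ (n - k) := by
        rw [div_pow, mul_pow]; field_simp
      _ ≤ x ^ u * Real.exp (n * ε / x) * x ^ (n - k) := by gcongr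
      _ = Real.exp (n * ε / x) * x ^ (n - #t) := by rw [hpow]; ring
  · have hempty : {s ∈ powersetCard k (univ : Finset ι) | t ⊆ s} = ∅ :=
      filter_eq_empty_iff.mpr fun s hs hts =>
        htk ((card_le_card hts).trans (mem_powersetCard.mp hs).2.le)
    rw [hempty, card_empty, Nat.cast_zero, zero_mul, zero_mul]
    positivity

theorem Matrix.PosSemidef.sum_principalMinor_add_diagonal_mul_le {G : Matrix ι ι ℝ}
    (hG : G.PosSemidef) {d : ι → ℝ} {ε x : ℝ} (hε : 0 ≤ ε) (hd : ∀ i, 0 ≤ d i)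
    (hdε : ∀ i, d i ≤ ε) (hx : 0 < x) {k : ℕ} (hk : k ≤ Fintype.card ι) :
    (∑ s ∈ powersetCard k univ, (G + diagonal d).principalMinor s) * x ^ (Fintype.card ι - k) ≤
      Real.exp (Fintype.card ι * ε / x) * (G + x • (1 : Matrix ι ι ℝ)).det := by
  set n := Fintype.card ι
  have hminor (t : Finset ι) : 0 ≤ G.principalMinor t := (hG.submatrix _).det_nonneg
  calc (∑ s ∈ powersetCard k univ, (G + diagonal d).principalMinor s) * x ^ (n - k)
      ≤ ∑ s ∈ powersetCard k univ, ∑ t ∈ s.powerset,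
          ε ^ (k - #t) * G.principalMinor t * x ^ (n - k) := by
        simp only [principalMinor_add_diagonal, sum_mul]
        refine sum_le_sum fun s hs => sum_le_sum fun t ht => ?_
        refine mul_le_mul_of_nonneg_right (mul_le_mul_of_nonneg_right ?_ (hminor t))
          (by positivity)
        calc ∏ i ∈ s \ t, d i ≤ ∏ _i ∈ s \ t, ε :=
              prod_le_prod (fun i _ => hd i) fun i _ => hdε i
          _ = ε ^ (k - #t) := by
            rw [prod_const, card_sdiff_of_subset (mem_powerset.mp ht),
              (mem_powersetCard.mp hs).2]
    _ = ∑ t : Finset ι, ∑ s ∈ powersetCard k univ with t ⊆ s,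
          ε ^ (k - #t) * G.principalMinor t * x ^ (n - k) :=
        sum_comm' fun s t => by simp [and_comm]
    _ = ∑ t : Finset ι, #{s ∈ powersetCard k univ | t ⊆ s} * ε ^ (k - #t) * x ^ (n - k) *
          G.principalMinor t := by
        refine sum_congr rfl fun t _ => ?_
        rw [sum_const, nsmul_eq_mul]; ring
    _ ≤ ∑ t : Finset ι, Real.exp (n * ε / x) * x ^ (n - #t) * G.principalMinor t :=
        sum_le_sum fun t _ => mul_le_mul_of_nonneg_right
          (card_filter_subset_powersetCard_mul_pow_le hk hε hx t) (hminor t)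
    _ = Real.exp (n * ε / x) * (G + x • (1 : Matrix ι ι ℝ)).det := by
        rw [det_add_smul_one_eq_sum_principalMinor, mul_sum]
        exact sum_congr rfl fun t _ => mul_assoc _ _ _

end SumPrincipalMinors

lemma posSemidefSqrt_mul_self {m : ℕ} {A : Matrix (Fin m) (Fin m) ℝ} (hA : A.PosSemidef) :
    posSemidefSqrt hA * posSemidefSqrt hA = A := by
  set U : Matrix (Fin m) (Fin m) ℝ := hA.1.eigenvectorUnitary.1
  have hUU : star U * U = 1 := Unitary.star_mul_self_of_mem hA.1.eigenvectorUnitary.2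
  have hsqrt : diagonal (((↑) ∘ (√·) ∘ hA.1.eigenvalues) : Fin m → ℝ) *
      diagonal (((↑) ∘ (√·) ∘ hA.1.eigenvalues) : Fin m → ℝ) =
        diagonal (RCLike.ofReal ∘ hA.1.eigenvalues) := by
    rw [diagonal_mul_diagonal]
    congr 1; funext i
    simp [Real.mul_self_sqrt (hA.eigenvalues_nonneg i)]
  conv_rhs => rw [hA.1.spectral_theorem, Unitary.conjStarAlgAut_apply]
  simp only [posSemidefSqrt, Matrix.mul_assoc]
  rw [← Matrix.mul_assoc (star U) U, hUU, Matrix.one_mul, ← Matrix.mul_assoc (diagonal _), hsqrt]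

lemma transpose_posSemidefSqrt {m : ℕ} {A : Matrix (Fin m) (Fin m) ℝ} (hA : A.PosSemidef) :
    (posSemidefSqrt hA)ᵀ = posSemidefSqrt hA := by
  rw [posSemidefSqrt, transpose_mul, transpose_mul, diagonal_transpose, star_eq_conjTranspose,
    conjTranspose_eq_transpose_of_trivial, transpose_transpose, Matrix.mul_assoc]

lemma whiten_mul_transpose {m n : ℕ} {Q : Matrix (Fin m) (Fin n) ℝ} (hQ : IsUnit (Q * Qᵀ)) :
    whiten Q * (whiten Q)ᵀ = 1 := by
  set S := posSemidefSqrt (posSemidef_mul_transpose_self Q)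
  have hSS : S * S = Q * Qᵀ := posSemidefSqrt_mul_self _
  have hS : IsUnit S.det := isUnit_of_mul_isUnit_left <| by
    rw [← det_mul, hSS]; exact (isUnit_iff_isUnit_det _).mp hQ
  have hSymm : Sᵀ = S := transpose_posSemidefSqrt _
  change S⁻¹ * Q * (S⁻¹ * Q)ᵀ = 1
  rw [transpose_mul, transpose_nonsing_inv, hSymm, Matrix.mul_assoc, ← Matrix.mul_assoc Q, ← hSS]
  simp only [← Matrix.mul_assoc]
  rw [nonsing_inv_mul _ hS, Matrix.one_mul, mul_nonsing_inv _ hS]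

lemma det_transpose_mul_add_smul_one {κ ι 𝕜 : Type*} [Fintype κ] [Fintype ι] [DecidableEq κ]
    [DecidableEq ι] [Field 𝕜] {W : Matrix κ ι 𝕜} (hW : W * Wᵀ = 1)
    (hκι : Fintype.card κ ≤ Fintype.card ι) {x : 𝕜} (hx : x ≠ 0) :
    (Wᵀ * W + x • (1 : Matrix ι ι 𝕜)).det =
      x ^ (Fintype.card ι - Fintype.card κ) * (1 + x) ^ Fintype.card κ := by
  have hfactor : Wᵀ * W + x • (1 : Matrix ι ι 𝕜) = x • (1 + Wᵀ * (x⁻¹ • W)) := by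
    rw [Matrix.mul_smul, smul_add, smul_smul, mul_inv_cancel₀ hx, one_smul, add_comm]
  rw [hfactor, det_smul, det_one_add_mul_comm, Matrix.smul_mul, hW,
    show (1 : Matrix κ κ 𝕜) + x⁻¹ • 1 = (1 + x⁻¹) • 1 by rw [add_smul, one_smul], det_smul,
    det_one, mul_one, ← Nat.sub_add_cancel hκι, pow_add, mul_assoc, ← mul_pow,
    Nat.add_sub_cancel, mul_add, mul_one, mul_inv_cancel₀ hx, add_comm x]

lemma exists_choose_mul_principalMinor_le {m n k : ℕ} (hkn : k ≤ n) (hmn : m ≤ n)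
    {W : Matrix (Fin m) (Fin n) ℝ} (hW : W * Wᵀ = 1) {d : Fin n → ℝ} {ε x : ℝ} (hε : 0 ≤ ε)
    (hd : ∀ i, 0 < d i) (hdε : ∀ i, d i ≤ ε) (hx : 0 < x) :
    ∃ s ∈ powersetCard k univ, 0 < (Wᵀ * W + diagonal d).principalMinor s ∧
      n.choose k * (Wᵀ * W + diagonal d).principalMinor s * x ^ (n - k) ≤
        Real.exp (n * ε / x) * (x ^ (n - m) * (1 + x) ^ m) := by
  have hne : (powersetCard k (univ : Finset (Fin n))).Nonempty :=
    powersetCard_nonempty.mpr (by simpa using hkn)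
  obtain ⟨s, hs, hmin⟩ := exists_min_image _ ((Wᵀ * W + diagonal d).principalMinor) hne
  have hgram : (Wᵀ * W).PosSemidef := by simpa using posSemidef_mul_transpose_self Wᵀ
  have hsum := hgram.sum_principalMinor_add_diagonal_mul_le hε (fun i => (hd i).le) hdε hx
    (k := k) (by simpa)
  rw [det_transpose_mul_add_smul_one hW (by simpa) hx.ne'] at hsum
  simp only [Fintype.card_fin] at hsum
  refine ⟨s, hs, ?_, le_trans ?_ hsum⟩
  · exact ((PosDef.posSemidef_add hgram (posDef_diagonal_iff.mpr hd)).submatrix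
      Subtype.val_injective).det_pos
  gcongr
  simpa using card_nsmul_le_sum _ _ _ hmin

noncomputable def capacityLoss {κ ι : Type*} [Fintype κ] [Fintype ι] [DecidableEq κ]
    [DecidableEq ι] (W : Matrix κ ι ℝ) (D : ι → ℝ) : ℝ :=
  (1 / 2) * Real.log (1 + diagonal D).det - (1 / 2) * Real.log (1 + W * diagonal D * Wᵀ).det

lemma neg_half_log_det_le_capacityLoss {κ ι : Type*} [Fintype κ] [Fintype ι] [DecidableEq κ]
    [DecidableEq ι] (W : Matrix κ ι ℝ) {D : ι → ℝ} (hD : ∀ i, 0 < D i) :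
    -(1 / 2) * Real.log (Wᵀ * W + diagonal D⁻¹).det ≤ capacityLoss W D := by
  have hgram : (Wᵀ * W + diagonal D⁻¹).PosDef := by
    refine PosDef.posSemidef_add ?_ (posDef_diagonal_iff.mpr fun i => inv_pos.mpr (hD i))
    rw [← conjTranspose_eq_transpose_of_trivial]
    exact posSemidef_conjTranspose_mul_self W
  have hfactor : 1 + diagonal D * (Wᵀ * W) = diagonal D * (Wᵀ * W + diagonal D⁻¹) := by
    rw [Matrix.mul_add, diagonal_mul_diagonal, add_comm, ← diagonal_one]
    congr 2
    ext i; simp [(hD i).ne']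
  have hsylvester :
      (1 + W * diagonal D * Wᵀ).det = (∏ i, D i) * (Wᵀ * W + diagonal D⁻¹).det := by
    rw [Matrix.mul_assoc, det_one_add_mul_comm, Matrix.mul_assoc, hfactor, det_mul, det_diagonal]
  have hprod_pos : 0 < ∏ i, D i := prod_pos fun i _ => hD i
  have hprod : Real.log (∏ i, D i) ≤ Real.log (1 + diagonal D).det := by
    rw [← diagonal_one, diagonal_add, det_diagonal]
    exact Real.log_le_log hprod_pos
      (prod_le_prod (fun i _ => (hD i).le) fun i _ => le_add_of_nonneg_left zero_le_one)
  rw [capacityLoss, hsylvester, Real.log_mul hprod_pos.ne' hgram.det_pos.ne']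
  linarith

lemma principalMinor_transpose_mul_add_diagonal {m n : ℕ} (W : Matrix (Fin m) (Fin n) ℝ)
    (d : Fin n → ℝ) (s : Finset (Fin n)) :
    (Wᵀ * W + diagonal d).principalMinor s =
      ((colSubmatrix W s)ᵀ * colSubmatrix W s + diagonal fun i : s => d i).det := by
  rw [principalMinor, ← Function.comp_def d, ← submatrix_diagonal _ _ Subtype.val_injective]
  rfl

lemma capacityLoss_colSubmatrix {m n : ℕ} {H : Matrix (Fin n) (Fin n) ℝ} (hH : H.IsDiag)
    (c : ℝ) (W : Matrix (Fin m) (Fin n) ℝ) (s : Finset (Fin n)) :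
    capacityLoss (colSubmatrix W s) (fun i : s => c * H i i ^ 2) =
      (1 / 2) * Real.log (1 + c • ((H.submatrix (↑) (↑) : Matrix s s ℝ) *
          (H.submatrix (↑) (↑) : Matrix s s ℝ))).det -
        (1 / 2) * Real.log (1 + c • (colSubmatrix W s *
          ((H.submatrix (↑) (↑) : Matrix s s ℝ) * (H.submatrix (↑) (↑) : Matrix s s ℝ)) *
            (colSubmatrix W s)ᵀ)).det := by
  have hsq : c • ((H.submatrix (↑) (↑) : Matrix s s ℝ) * (H.submatrix (↑) (↑) : Matrix s s ℝ)) =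
      diagonal fun i : s => c * H i i ^ 2 := by
    rw [← hH.diagonal_diag, submatrix_diagonal _ _ Subtype.val_injective, diagonal_mul_diagonal,
      ← diagonal_smul]
    congr 1; ext i; simp [sq]
  rw [capacityLoss, ← hsq, Matrix.mul_smul, Matrix.smul_mul]

lemma Nat.choose_mul_pow_le_choose_mul_pow {n j k : ℕ} (hjk : j ≤ k) :
    n.choose j * (n - k) ^ (k - j) ≤ n.choose k * k ^ (k - j) := by
  have hsymm : (k - j).factorial * k.choose j = k.descFactorial (k - j) := by
    rw [descFactorial_eq_factorial_mul_choose, choose_symm hjk]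
  calc n.choose j * (n - k) ^ (k - j)
      ≤ n.choose j * (n - j).descFactorial (k - j) :=
        Nat.mul_le_mul_left _ <| (Nat.pow_le_pow_left (by omega) _).trans
          (pow_sub_le_descFactorial (n - j) (k - j))
    _ = n.choose k * k.descFactorial (k - j) := by
        rw [descFactorial_eq_factorial_mul_choose, ← hsymm, mul_left_comm, ← choose_mul hjk,
          mul_left_comm]
    _ ≤ n.choose k * k ^ (k - j) := Nat.mul_le_mul_left _ (descFactorial_le_pow k _)

lemma Nat.choose_mul_pow_mul_pow_le {n j k : ℕ} (hj : j ≤ n) (hk : k ≤ n) :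
    n.choose j * k ^ j * (n - k) ^ (n - j) ≤ n.choose k * k ^ k * (n - k) ^ (n - k) := by
  wlog hjk : j ≤ k generalizing j k
  · -- the substitution `j ↦ n - j`, `k ↦ n - k` leaves both sides unchanged
    have h := this (n.sub_le j) (n.sub_le k) (by omega)
    rwa [choose_symm hj, choose_symm hk, Nat.sub_sub_self hk, Nat.sub_sub_self hj,
      mul_right_comm, mul_right_comm (n.choose k)] at h
  calc n.choose j * k ^ j * (n - k) ^ (n - j)
      = n.choose j * (n - k) ^ (k - j) * (k ^ j * (n - k) ^ (n - k)) := by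
        rw [show n - j = (k - j) + (n - k) by omega, pow_add]; ring
    _ ≤ n.choose k * k ^ (k - j) * (k ^ j * (n - k) ^ (n - k)) :=
        Nat.mul_le_mul_right _ (choose_mul_pow_le_choose_mul_pow hjk)
    _ = n.choose k * k ^ (k - j + j) * (n - k) ^ (n - k) := by ring
    _ = n.choose k * k ^ k * (n - k) ^ (n - k) := by rw [Nat.sub_add_cancel hjk]

lemma Nat.pow_self_le_succ_mul_choose_mul_pow {n k : ℕ} (hk : k ≤ n) :
    n ^ n ≤ (n + 1) * (n.choose k * k ^ k * (n - k) ^ (n - k)) := by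
  calc n ^ n = ∑ j ∈ range (n + 1), n.choose j * k ^ j * (n - k) ^ (n - j) := by
        rw [← congrArg (· ^ n) (Nat.add_sub_cancel' hk), add_pow]
        exact sum_congr rfl fun j _ => by rw [Nat.cast_id]; ring
    _ ≤ ∑ _j ∈ range (n + 1), n.choose k * k ^ k * (n - k) ^ (n - k) :=
        sum_le_sum fun j hj => choose_mul_pow_mul_pow_le (Nat.lt_succ_iff.mp (mem_range.mp hj)) hk
    _ = (n + 1) * (n.choose k * k ^ k * (n - k) ^ (n - k)) := by simp

lemma mul_log_div_eq (x : ℝ) {y : ℝ} (hy : y ≠ 0) :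
    x * Real.log (x / y) = x * Real.log x - x * Real.log y := by
  rcases eq_or_ne x 0 with rfl | hx
  · simp
  · rw [Real.log_div hx hy, mul_sub]

lemma add_mul_binEntropy_div_add {a b : ℝ} (hab : a + b ≠ 0) :
    (a + b) * binEntropy (a / (a + b)) =
      (a + b) * Real.log (a + b) - a * Real.log a - b * Real.log b := by
  have hb : 1 - a / (a + b) = b / (a + b) := by field_simp; ring
  have hexpand : (a + b) * binEntropy (a / (a + b)) =
      -(a * Real.log (a / (a + b))) - b * Real.log (b / (a + b)) := by
    rw [binEntropy, hb]; field_simp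
  rw [hexpand, mul_log_div_eq a hab, mul_log_div_eq b hab]
  ring

lemma mul_binEntropy_le_log_succ_add_log_choose {n k : ℕ} (hk : k ≤ n) :
    n * binEntropy (k / n) ≤ Real.log (n + 1) + Real.log (n.choose k) := by
  rcases Nat.eq_zero_or_pos n with rfl | hn
  · simp [Nat.le_zero.mp hk]
  have hbound : ((n ^ n : ℕ) : ℝ) ≤ ((n + 1) * (n.choose k * k ^ k * (n - k) ^ (n - k)) : ℕ) :=
    Nat.cast_le.mpr (Nat.pow_self_le_succ_mul_choose_mul_pow hk)
  have hpos : (0 : ℝ) < (n ^ n : ℕ) := by exact_mod_cast Nat.pow_self_pos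
  have hchoose : (0 : ℝ) < n.choose k := by exact_mod_cast Nat.choose_pos hk
  have hkk : (0 : ℝ) < k ^ k := by exact_mod_cast Nat.pow_self_pos
  have hnk : (0 : ℝ) < ((n - k : ℕ) : ℝ) ^ (n - k) := by exact_mod_cast Nat.pow_self_pos
  have hlog := Real.log_le_log hpos hbound
  push_cast at hlog
  rw [Real.log_mul (by positivity) (by positivity), Real.log_mul (by positivity) hnk.ne',
    Real.log_mul hchoose.ne' hkk.ne', Real.log_pow, Real.log_pow, Real.log_pow] at hlog
  have hentropy := add_mul_binEntropy_div_add (a := k) (b := n - k)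
    (by rw [add_sub_cancel]; exact_mod_cast hn.ne')
  rw [add_sub_cancel, ← Nat.cast_sub hk] at hentropy
  rw [hentropy]
  push_cast [Nat.cast_sub hk] at hlog ⊢
  linarith

lemma mul_log_one_add_sub_mul_log_le {k m u : ℝ} (hk : 0 < k) (hkm : k ≤ m) (hu : 0 < u) :
    m * Real.log (1 + ((m - k) / k + u)) - (m - k) * Real.log ((m - k) / k + u) ≤
      m * binEntropy (k / m) + m * u := by
  set a := (m - k) / k with ha_def
  have ha : 0 ≤ a := div_nonneg (sub_nonneg.mpr hkm) hk.le
  have hentropy : m * binEntropy (k / m) = m * Real.log (1 + a) - (m - k) * Real.log a := by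
    have h := add_mul_binEntropy_div_add (a := k) (b := m - k) (by linarith)
    rw [add_sub_cancel] at h
    rw [h, show 1 + a = m / k by rw [ha_def]; field_simp; ring, mul_log_div_eq m hk.ne',
      mul_log_div_eq (m - k) hk.ne']
    ring
  have hshift : Real.log (1 + (a + u)) ≤ Real.log (1 + a) + u :=
    calc Real.log (1 + (a + u)) ≤ Real.log ((1 + a) * Real.exp u) :=
          Real.log_le_log (by linarith) (by nlinarith [Real.add_one_le_exp u])
      _ = Real.log (1 + a) + u := by
          rw [Real.log_mul (by linarith) (Real.exp_pos u).ne', Real.log_exp]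
  have hmono : (m - k) * Real.log a ≤ (m - k) * Real.log (a + u) := by
    rcases hkm.eq_or_lt with rfl | hlt
    · simp
    · exact mul_le_mul_of_nonneg_left
        (Real.log_le_log (div_pos (sub_pos.mpr hlt) hk) (by linarith)) (sub_nonneg.mpr hkm)
  nlinarith [mul_le_mul_of_nonneg_left hshift (hk.le.trans hkm)]

lemma le_neg_half_log_of_choose_mul_le {n m k : ℕ} (hk : 1 ≤ k) (hkm : k ≤ m) (hmn : m ≤ n)
    {u x μ : ℝ} (hu : 0 < u) (hx : x = ((m : ℝ) - k) / k + u) (hμ : 0 < μ)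
    (hμx : n.choose k * μ * x ^ (n - k) ≤
      Real.exp (n * u ^ 2 / x) * (x ^ (n - m) * (1 + x) ^ m)) :
    (n / 2 : ℝ) * (binEntropy (k / n) - (m / n) * binEntropy (k / m) - 2 * u -
      Real.log (n + 1) / n) ≤ -(1 / 2) * Real.log μ := by
  have hk₀ : (0 : ℝ) < k := by exact_mod_cast hk
  have hkm' : (k : ℝ) ≤ m := by exact_mod_cast hkm
  have hmn' : (m : ℝ) ≤ n := by exact_mod_cast hmn
  have hn : (0 : ℝ) < n := hk₀.trans_le (hkm'.trans hmn')
  have hux : u ≤ x := by rw [hx]; linarith [div_nonneg (sub_nonneg.mpr hkm') hk₀.le]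
  have hx₀ : 0 < x := hu.trans_le hux
  have hchoose : (0 : ℝ) < n.choose k := by exact_mod_cast Nat.choose_pos (hkm.trans hmn)
  have hlog := Real.log_le_log (by positivity) hμx
  rw [Real.log_mul (by positivity) (by positivity), Real.log_mul hchoose.ne' hμ.ne',
    Real.log_mul (by positivity) (by positivity), Real.log_mul (by positivity) (by positivity),
    Real.log_exp, Real.log_pow, Real.log_pow, Real.log_pow, Nat.cast_sub (hkm.trans hmn),
    Nat.cast_sub hmn] at hlog
  have hentropy := mul_binEntropy_le_log_succ_add_log_choose (hkm.trans hmn)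
  have hsampled := mul_log_one_add_sub_mul_log_le hk₀ hkm' hu
  rw [← hx] at hsampled
  have hquad : n * u ^ 2 / x ≤ n * u := by
    rw [div_le_iff₀ hx₀]
    nlinarith [mul_le_mul_of_nonneg_left hux (by positivity : (0 : ℝ) ≤ n * u)]
  rw [show (n / 2 : ℝ) * (binEntropy (k / n) - (m / n) * binEntropy (k / m) - 2 * u -
      Real.log (n + 1) / n) = (n * binEntropy (k / n) - m * binEntropy (k / m) - 2 * n * u -
      Real.log (n + 1)) / 2 by field_simp]
  linarith [mul_le_mul_of_nonneg_right hmn' hu.le]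

/-- (Discrete-time sparse vector channel, channel-independent sampling.)
For `1 ≤ k ≤ m ≤ n`, a diagonal `n × n` real channel matrix `H` with nonzero diagonal,
power `P > 0`, `c := P/k`, `SNR_min := c · min_i H_ii²`, and any `m × n` real sampling
matrix `Q` with `Q Qᵀ` invertible, the worst-case sampled capacity loss
`max_s L_s` over `k`-element subsets `s` is at least
`(n/2)·(H(k/n) − (m/n)·H(k/m) − 2/√SNR_min − log(n+1)/n)`. -/
theorem max_capacity_loss_ge
    (n m k : ℕ) (hk : 1 ≤ k) (hkm : k ≤ m) (hmn : m ≤ n)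
    (H : Matrix (Fin n) (Fin n) ℝ)
    (hHdiag : ∀ i j, i ≠ j → H i j = 0) (hHne : ∀ i, H i i ≠ 0)
    (P : ℝ) (hP : 0 < P)
    (Q : Matrix (Fin m) (Fin n) ℝ) (hQ : IsUnit (Q * Qᵀ)) :
    letI c : ℝ := P / k
    letI SNRmin : ℝ :=
      c * Finset.univ.inf' ⟨⟨0, by omega⟩, Finset.mem_univ _⟩ (fun i => (H i i) ^ 2)
    letI Hs : (s : Finset (Fin n)) → Matrix {j // j ∈ s} {j // j ∈ s} ℝ :=
      fun s => H.submatrix (fun i : {j // j ∈ s} => (i : Fin n)) (fun i => (i : Fin n))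
    letI L : Finset (Fin n) → ℝ := fun s =>
      (1 / 2) * Real.log ((1 + c • (Hs s * Hs s)).det)
        - (1 / 2) * Real.log
            ((1 + c • (colSubmatrix (whiten Q) s * (Hs s * Hs s) *
              (colSubmatrix (whiten Q) s)ᵀ)).det)
    ((n : ℝ) / 2) *
        (binEntropy ((k : ℝ) / n) - ((m : ℝ) / n) * binEntropy ((k : ℝ) / m)
          - 2 / Real.sqrt SNRmin - Real.log (n + 1) / n)
      ≤ (Finset.univ.powersetCard k).sup'
          (Finset.powersetCard_nonempty.mpr (by simpa using hkm.trans hmn)) L := by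
  set c := P / (k : ℝ)
  set SNRmin := c * univ.inf' ⟨⟨0, by omega⟩, mem_univ _⟩ (fun i : Fin n => H i i ^ 2)
  set u := (√SNRmin)⁻¹
  have hc : 0 < c := div_pos hP (Nat.cast_pos.mpr hk)
  have hH (i : Fin n) : 0 < c * H i i ^ 2 := mul_pos hc (sq_pos_of_ne_zero (hHne i))
  have hSNR : 0 < SNRmin := mul_pos hc ((lt_inf'_iff _).mpr fun i _ => sq_pos_of_ne_zero (hHne i))
  have hu : 0 < u := inv_pos.mpr (Real.sqrt_pos.mpr hSNR)
  have hd_le (i : Fin n) : (c * H i i ^ 2)⁻¹ ≤ u ^ 2 := by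
    rw [inv_pow, Real.sq_sqrt hSNR.le]
    exact inv_anti₀ hSNR (mul_le_mul_of_nonneg_left (inf'_le _ (mem_univ i)) hc.le)
  have hx : 0 < ((m : ℝ) - k) / k + u :=
    add_pos_of_nonneg_of_pos (div_nonneg (sub_nonneg.mpr (by exact_mod_cast hkm)) k.cast_nonneg) hu
  obtain ⟨s, hs, hpos, hminor⟩ := exists_choose_mul_principalMinor_le (hkm.trans hmn) hmn
    (whiten_mul_transpose hQ) (sq_nonneg u) (fun i => inv_pos.mpr (hH i)) hd_le hx
  refine le_trans ?_ (le_sup' _ hs)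
  calc _ = (n / 2 : ℝ) * (binEntropy (k / n) - (m / n) * binEntropy (k / m) - 2 * u -
        Real.log (n + 1) / n) := by rw [div_eq_mul_inv (2 : ℝ)]
    _ ≤ -(1 / 2) * Real.log (((whiten Q)ᵀ * whiten Q +
          diagonal fun i => (c * H i i ^ 2)⁻¹).principalMinor s) :=
        le_neg_half_log_of_choose_mul_le hk hkm hmn hu rfl hpos hminor
    _ ≤ capacityLoss (colSubmatrix (whiten Q) s) (fun i : s => c * H i i ^ 2) := by
        rw [principalMinor_transpose_mul_add_diagonal]
        exact neg_half_log_det_le_capacityLoss _ fun i => hH i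
    _ = _ := capacityLoss_colSubmatrix hHdiag c _ s
end

section
/- Let M be an m×n real matrix, let s be a k-element subset of {1,…,n} with complement s^c, and suppose that M Mᵀ and Ξ := (1/n)·(M Mᵀ − M_s M_sᵀ) = (1/n)·M_{s^c} (M_{s^c})ᵀ are both invertible. Then for every ε > 0, (1/n)·log det(ε·I_k + M_sᵀ (M Mᵀ)^{−1} M_s) = (1/n)·log det(ε·I_k + (1+ε)·(1/n)·M_sᵀ Ξ^{−1} M_s) + (1/n)·log det(Ξ) − (1/n)·log det((1/n)·M Mᵀ). -/
open Matrix Finset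

/-!
Both sides come from the matrix determinant lemma
`det (ε I + Sᵀ B⁻¹ S) · det B = ε ^ k · det (B + ε⁻¹ S Sᵀ)`, applied once with `B = M Mᵀ` and
once with `B = Ξ` (and `Sᵀ` rescaled by `(1 + ε) / n`). The two matrices `B + ε⁻¹ S Sᵀ` then agree
up to the factor `1 / n`, because `(1 + ε) / (ε n) - 1 / n = 1 / (ε n)`. Taking logarithms needs
all determinants nonzero; the one on the left is positive since `ε I + Sᵀ (M Mᵀ)⁻¹ S` is
positive definite.
-/

namespace Matrix

variable {K : Type*} [Field K] {p q : Type*} [Fintype p] [Fintype q] [DecidableEq p]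
  [DecidableEq q]

theorem det_smul_one_add_mul_inv_mul {B : Matrix p p K} (hB : IsUnit B.det)
    (S : Matrix p q K) (T : Matrix q p K) {ε : K} (hε : ε ≠ 0) :
    (ε • 1 + T * B⁻¹ * S).det * B.det = ε ^ Fintype.card q * (B + ε⁻¹ • (S * T)).det := by
  have hscale : ε • (1 : Matrix q q K) + T * B⁻¹ * S = ε • (1 + (ε⁻¹ • T) * B⁻¹ * S) := by
    rw [smul_add, smul_mul, smul_mul, smul_smul, mul_inv_cancel₀ hε, one_smul]
  rw [hscale, det_smul, ← Matrix.mul_smul, det_add_mul _ _ hB, mul_assoc, mul_comm B.det]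

theorem det_smul_one_add_transpose_mul_inv_mul_decouple {A : Matrix p p K} (hA : IsUnit A.det)
    (S : Matrix p q K) (c : K) (hΞ : IsUnit (c • (A - S * Sᵀ)).det) {ε : K} (hε : ε ≠ 0) :
    (ε • 1 + Sᵀ * A⁻¹ * S).det * (c • A).det
      = (ε • 1 + (1 + ε) • (c • (Sᵀ * (c • (A - S * Sᵀ))⁻¹ * S))).det
        * (c • (A - S * Sᵀ)).det := by
  set Ξ := c • (A - S * Sᵀ)
  have hshift : c • (A + ε⁻¹ • (S * Sᵀ)) = Ξ + ε⁻¹ • (S * (((1 + ε) * c) • Sᵀ)) := by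
    rw [Matrix.mul_smul]
    match_scalars <;> field_simp; ring
  calc (ε • 1 + Sᵀ * A⁻¹ * S).det * (c • A).det
      = c ^ Fintype.card p * ((ε • 1 + Sᵀ * A⁻¹ * S).det * A.det) := by
        rw [det_smul]; ring
    _ = c ^ Fintype.card p * (ε ^ Fintype.card q * (A + ε⁻¹ • (S * Sᵀ)).det) := by
        rw [det_smul_one_add_mul_inv_mul hA S Sᵀ hε]
    _ = ε ^ Fintype.card q * (Ξ + ε⁻¹ • (S * (((1 + ε) * c) • Sᵀ))).det := by
        rw [← hshift, det_smul]; ring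
    _ = (ε • 1 + (1 + ε) • (c • (Sᵀ * Ξ⁻¹ * S))).det * Ξ.det := by
        rw [← det_smul_one_add_mul_inv_mul hΞ S _ hε, smul_mul, smul_mul, mul_smul]

theorem det_smul_one_add_transpose_mul_inv_mul_pos {A : Matrix p p ℝ} (hA : A.PosSemidef)
    (S : Matrix p q ℝ) {ε : ℝ} (hε : 0 < ε) : 0 < (ε • 1 + Sᵀ * A⁻¹ * S).det := by
  have hSAS : (Sᵀ * A⁻¹ * S).PosSemidef := by
    simpa only [conjTranspose_eq_transpose_of_trivial] using hA.inv.conjTranspose_mul_mul_same S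
  exact ((PosDef.one.smul hε).add_posSemidef hSAS).det_pos

end Matrix

theorem log_det_decoupling_identity_general
    (m n : ℕ) (M : Matrix (Fin m) (Fin n) ℝ)
    (s : Finset (Fin n))
    (hM : IsUnit (M * Mᵀ))
    (hΞ : IsUnit ((n : ℝ)⁻¹ • (M * Mᵀ - colSubmatrix M s * (colSubmatrix M s)ᵀ)))
    (ε : ℝ) (hε : 0 < ε) :
    letI Ξ : Matrix (Fin m) (Fin m) ℝ :=
      (n : ℝ)⁻¹ • (M * Mᵀ - colSubmatrix M s * (colSubmatrix M s)ᵀ)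
    (n : ℝ)⁻¹ * Real.log ((ε • (1 : Matrix {j // j ∈ s} {j // j ∈ s} ℝ) +
        (colSubmatrix M s)ᵀ * (M * Mᵀ)⁻¹ * colSubmatrix M s).det)
      = (n : ℝ)⁻¹ * Real.log ((ε • (1 : Matrix {j // j ∈ s} {j // j ∈ s} ℝ) +
            (1 + ε) • ((n : ℝ)⁻¹ • ((colSubmatrix M s)ᵀ * Ξ⁻¹ * colSubmatrix M s))).det)
        + (n : ℝ)⁻¹ * Real.log Ξ.det
        - (n : ℝ)⁻¹ * Real.log (((n : ℝ)⁻¹ • (M * Mᵀ)).det) := by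
  set Ξ := (n : ℝ)⁻¹ • (M * Mᵀ - colSubmatrix M s * (colSubmatrix M s)ᵀ)
  rcases eq_or_ne (n : ℝ) 0 with hn | hn
  · simp [hn]
  set S := colSubmatrix M s
  set A := M * Mᵀ
  have hAdet := (isUnit_iff_isUnit_det A).mp hM
  have hΞdet := (isUnit_iff_isUnit_det Ξ).mp hΞ
  have hdet := det_smul_one_add_transpose_mul_inv_mul_decouple hAdet S (n : ℝ)⁻¹ hΞdet hε.ne'
  have hL : 0 < (ε • 1 + Sᵀ * A⁻¹ * S).det :=
    det_smul_one_add_transpose_mul_inv_mul_pos (posSemidef_self_mul_conjTranspose M) S hε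
  have hnA : ((n : ℝ)⁻¹ • A).det ≠ 0 := by
    rw [det_smul]
    exact mul_ne_zero (pow_ne_zero _ (inv_ne_zero hn)) hAdet.ne_zero
  have hR : (ε • 1 + (1 + ε) • ((n : ℝ)⁻¹ • (Sᵀ * Ξ⁻¹ * S))).det ≠ 0 := by
    intro h
    rw [h, zero_mul] at hdet
    exact mul_ne_zero hL.ne' hnA hdet
  have hlog := congrArg Real.log hdet
  rw [Real.log_mul hL.ne' hnA, Real.log_mul hR hΞdet.ne_zero] at hlog
  linear_combination (n : ℝ)⁻¹ * hlog

/-- For an `m × n` real matrix `M` and a `k`-element column subset `s`,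
with `Ξ := (1/n)(M Mᵀ − M_s M_sᵀ)` and both `M Mᵀ` and `Ξ` invertible, for every `ε > 0`:
`(1/n) log det(ε I + M_sᵀ (M Mᵀ)⁻¹ M_s)
  = (1/n) log det(ε I + (1+ε)(1/n) M_sᵀ Ξ⁻¹ M_s) + (1/n) log det Ξ
    − (1/n) log det((1/n) M Mᵀ)`. -/
theorem log_det_decoupling_identity
    (m n k : ℕ) (M : Matrix (Fin m) (Fin n) ℝ)
    (s : Finset (Fin n)) (hs : s.card = k)
    (hM : IsUnit (M * Mᵀ))
    (hΞ : IsUnit ((n : ℝ)⁻¹ • (M * Mᵀ - colSubmatrix M s * (colSubmatrix M s)ᵀ)))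
    (ε : ℝ) (hε : 0 < ε) :
    letI Ξ : Matrix (Fin m) (Fin m) ℝ :=
      (n : ℝ)⁻¹ • (M * Mᵀ - colSubmatrix M s * (colSubmatrix M s)ᵀ)
    (n : ℝ)⁻¹ * Real.log ((ε • (1 : Matrix {j // j ∈ s} {j // j ∈ s} ℝ) +
        (colSubmatrix M s)ᵀ * (M * Mᵀ)⁻¹ * colSubmatrix M s).det)
      = (n : ℝ)⁻¹ * Real.log ((ε • (1 : Matrix {j // j ∈ s} {j // j ∈ s} ℝ) +
            (1 + ε) • ((n : ℝ)⁻¹ • ((colSubmatrix M s)ᵀ * Ξ⁻¹ * colSubmatrix M s))).det)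
        + (n : ℝ)⁻¹ * Real.log Ξ.det
        - (n : ℝ)⁻¹ * Real.log (((n : ℝ)⁻¹ • (M * Mᵀ)).det) :=
  log_det_decoupling_identity_general m n M s hM hΞ ε hε
end
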